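/- The group Γ_D acts freely on ℝ³: every element of Γ_D other than the identity has no fixed point in ℝ³. -/
import Mathlib


noncomputable section

/-- Points of `ℝ³`, written as `(x, y, z)`. -/
abbrev R3 : Type := ℝ × ℝ × ℝ

/-- The translation `T_w : x ↦ x + w` of `ℝ³`, as a bijection (it is an isometry). -/
def transl (w : R3) : Equiv.Perm R3 := Equiv.addRight w

/-- The quarter-turn screw motion `τ(x,y,z) = (−y, x, z+1/2)`, as a bijection
(it is an isometry). -/
def tauE : Equiv.Perm R3 where
  toFun p := (-p.2.1, p.1, p.2.2 + 1/2)
  invFun p := (p.2.1, -p.1, p.2.2 - 1/2)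
  left_inv p := by obtain ⟨x, y, z⟩ := p; simp
  right_inv p := by obtain ⟨x, y, z⟩ := p; simp

/-- The half-turn screw motion `ρ_x(x,y,z) = (x+1/2, −y, −z)`, as a bijection
(it is an isometry). -/
def rhoxE : Equiv.Perm R3 where
  toFun p := (p.1 + 1/2, -p.2.1, -p.2.2)
  invFun p := (p.1 - 1/2, -p.2.1, -p.2.2)
  left_inv p := by obtain ⟨x, y, z⟩ := p; simp
  right_inv p := by obtain ⟨x, y, z⟩ := p; simp

/-- The half-turn screw motion `ρ_y(x,y,z) = (−x, y+1/2, 1−z)`, as a bijection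
(it is an isometry). -/
def rhoyE : Equiv.Perm R3 where
  toFun p := (-p.1, p.2.1 + 1/2, 1 - p.2.2)
  invFun p := (-p.1, p.2.1 - 1/2, 1 - p.2.2)
  left_inv p := by obtain ⟨x, y, z⟩ := p; simp
  right_inv p := by obtain ⟨x, y, z⟩ := p; simp

/-- `Γ_T`, the covering group of the tetracosm Tetra: the group generated by the
translations `T_{(1,0,0)}, T_{(0,1,0)}, T_{(0,0,2)}` and `τ`. -/
def GammaT : Subgroup (Equiv.Perm R3) :=
  Subgroup.closure {transl (1, 0, 0), transl (0, 1, 0), transl (0, 0, 2), tauE}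

/-- `Γ_D`, the covering group of the didicosm Didi: the group generated by the
translations `T_{(1,0,0)}, T_{(0,1,0)}, T_{(0,0,2)}` and `ρ_x`, `ρ_y`. -/
def GammaD : Subgroup (Equiv.Perm R3) :=
  Subgroup.closure {transl (1, 0, 0), transl (0, 1, 0), transl (0, 0, 2), rhoxE, rhoyE}

end

/-! ### Auxiliary material for statement 11 -/

namespace GammaDFree

/-- Sign associated to a boolean. -/
noncomputable def sg (b : Bool) : ℝ := if b then -1 else 1

/-- Offset associated to a boolean. -/
noncomputable def off (b : Bool) : ℝ := if b then 1/2 else 0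

/-- Integer correction term arising in compositions. -/
def ka (s t t' : Bool) : ℤ :=
  if t' then (if s then (if t then 0 else -1) else (if t then 1 else 0)) else 0

/-- Negation-or-not of an integer. -/
def ng (s : Bool) (a : ℤ) : ℤ := if s then -a else a

/-- The normal form for elements of `Γ_D`. -/
def Good (γ : Equiv.Perm R3) : Prop :=
  ∃ (s t : Bool) (a b c : ℤ), ∀ x y z : ℝ,
    γ (x, y, z) = (sg s * x + a + off t, sg t * y + b + off s,
      sg s * sg t * z + 2 * c + 2 * off s)

lemma good_one : Good 1 :=
  ⟨false, false, 0, 0, 0, fun x y z => by simp [sg, off]⟩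

lemma good_mul {γ δ : Equiv.Perm R3} (h1 : Good γ) (h2 : Good δ) : Good (γ * δ) := by
  obtain ⟨s, t, a, b, c, hγ⟩ := h1
  obtain ⟨s', t', a', b', c', hδ⟩ := h2
  refine ⟨xor s s', xor t t', ng s a' + a + ka s t t', ng t b' + b + ka t s s',
    ng (xor s t) c' + c + ka (xor s t) s s', fun x y z => ?_⟩
  have hcomp : (γ * δ) (x, y, z) = γ (δ (x, y, z)) := rfl
  rw [hcomp, hδ x y z, hγ]
  simp only [Prod.mk.injEq]
  refine ⟨?_, ?_, ?_⟩ <;>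
    cases s <;> cases t <;> cases s' <;> cases t' <;>
    norm_num [sg, off, ka, ng] <;> push_cast <;> ring

lemma good_inv {γ : Equiv.Perm R3} (h1 : Good γ) : Good γ⁻¹ := by
  obtain ⟨s, t, a, b, c, hγ⟩ := h1
  refine ⟨s, t, if s then a else -a - (if t then 1 else 0),
    if t then b else -b - (if s then 1 else 0),
    if xor s t then c else -c - (if s then 1 else 0), fun x y z => ?_⟩
  apply γ.injective
  rw [show γ (γ⁻¹ (x, y, z)) = (x, y, z) from γ.apply_symm_apply _]
  rw [hγ]
  simp only [Prod.mk.injEq]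
  refine ⟨?_, ?_, ?_⟩ <;>
    cases s <;> cases t <;>
    norm_num [sg, off] <;> push_cast <;> ring

lemma good_of_mem {γ : Equiv.Perm R3} (h : γ ∈ GammaD) : Good γ := by
  induction h using Subgroup.closure_induction with
  | mem g hg =>
    simp only [Set.mem_insert_iff, Set.mem_singleton_iff] at hg
    rcases hg with rfl | rfl | rfl | rfl | rfl
    · exact ⟨false, false, 1, 0, 0, fun x y z => by
        norm_num [transl, sg, off, Prod.ext_iff]⟩
    · exact ⟨false, false, 0, 1, 0, fun x y z => by
        norm_num [transl, sg, off, Prod.ext_iff]⟩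
    · exact ⟨false, false, 0, 0, 1, fun x y z => by
        norm_num [transl, sg, off, Prod.ext_iff]⟩
    · exact ⟨false, true, 0, 0, 0, fun x y z => by
        norm_num [rhoxE, sg, off, Prod.ext_iff] <;> ring⟩
    · exact ⟨true, false, 0, 0, 0, fun x y z => by
        norm_num [rhoyE, sg, off, Prod.ext_iff] <;> ring⟩
  | one => exact good_one
  | mul a b ha hb iha ihb => exact good_mul iha ihb
  | inv a ha iha => exact good_inv iha

end GammaDFree

/-- `Γ_D` acts freely on `ℝ³`: every element other than the identity has
no fixed point. -/
theorem gammaD_free (γ : Equiv.Perm R3) (hγ : γ ∈ GammaD) (hne : γ ≠ 1) (p : R3) :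
    γ p ≠ p := by
  obtain ⟨s, t, a, b, c, hf⟩ := GammaDFree.good_of_mem hγ
  obtain ⟨x, y, z⟩ := p
  intro h
  rw [hf x y z] at h
  rw [Prod.ext_iff, Prod.ext_iff] at h
  obtain ⟨h1, h2, h3⟩ := h
  cases s <;> cases t <;>
    norm_num [GammaDFree.sg, GammaDFree.off] at h1 h2 h3
  · -- identity type: a = b = c = 0, so γ = 1
    apply hne
    apply Equiv.ext
    rintro ⟨x', y', z'⟩
    rw [hf x' y' z', h1, h2, h3]
    norm_num [GammaDFree.sg, GammaDFree.off]
  · -- ρ_x type: x + a + 1/2 = x impossible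
    have h' : (2 * a : ℝ) = -1 := by linarith
    have h'' : (2 * a : ℤ) = -1 := by exact_mod_cast h'
    omega
  · -- ρ_y type: y + b + 1/2 = y impossible
    have h' : (2 * b : ℝ) = -1 := by linarith
    have h'' : (2 * b : ℤ) = -1 := by exact_mod_cast h'
    omega
  · -- ρ_xρ_y type: z + 2c + 1 = z impossible
    have h' : (2 * c : ℝ) = -1 := by linarith
    have h'' : (2 * c : ℤ) = -1 := by exact_mod_cast h'
    omega
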